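/- arXiv:1709.04048 — 2 statements merged into one kernel-verified Lean document; each statement's English description precedes it below -/
import Mathlib

section
/- For Unbiased Space Saving, fix an item i and let D_i(t+1) = N̂_i(t+1) − N̂_i(t) − (n_i(t+1) − n_i(t)) be the martingale increment at step t+1. Conditional on the sketch state after t elements and on the identity of the (t+1)-st stream item: (a) if the arriving item is i and i is not a label in the sketch, or (b) if the arriving item is not a label in the sketch and the selected minimal bin is labeled i, then the conditional second moment satisfies E[D_i(t+1)²] = N̂_min(t), where N̂_min(t) is the count of the selected minimal bin before the update; in all other cases D_i(t+1) = 0. -/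
/-!
Let `c` be the count of the selected minimal bin. If the arriving item `x` is already a label,
its bin is incremented and `N̂_i` moves in step with `n_i`, so `D = 0`; the same holds when `x` is
new and neither `x` nor the label of the overwritten bin is `i`. Otherwise `D` depends only on the
coin `u`: in case (a) it is `c` with probability `1/(c+1)` (the bin is relabelled `i`) and `-1`
otherwise, in case (b) it is `-c` or `1` with the same probabilities. Either way `D²` is `c²` with
probability `1/(c+1)` and `1` otherwise, with mean `c²/(c+1) + c/(c+1) = c`.
-/

open MeasureTheory ProbabilityTheory Filter

/-- The state of a Space Saving sketch with `m` bins: each bin holds an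
optional label (`none` = no label yet) and a count. -/
abbrev SSState (m : ℕ) := Fin m → Option ℕ × ℕ

/-- Initial state: all bins unlabeled with count 0. -/
def initState (m : ℕ) : SSState m := fun _ => (none, 0)

/-- The minimal bin count `N̂_min` (0 when `m = 0`). -/
noncomputable def minCount {m : ℕ} (s : SSState m) : ℕ := ⨅ j, (s j).2

/-- The maximal bin count `N̂_max` (0 when `m = 0`). -/
noncomputable def maxCount {m : ℕ} (s : SSState m) : ℕ := ⨆ j, (s j).2

/-- Select a bin of minimal count using the tie-breaking randomness `v`:
among the `k` bins of minimal count (sorted by index), the one of rank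
`⌊v * k⌋` (clamped) is chosen; this is a uniformly random choice among the
tied bins when `v` is uniform on `[0,1)`.  Returns `none` iff `m = 0`. -/
noncomputable def pickMin {m : ℕ} (s : SSState m) (v : ℝ) : Option (Fin m) :=
  let l := (Finset.univ.filter fun j => ∀ k, (s j).2 ≤ (s k).2).sort (· ≤ ·)
  l[min (⌊v * l.length⌋.toNat) (l.length - 1)]?

/-- One step of the (Unbiased) Space Saving update upon arrival of item `x`,
with label-replacement randomness `u` and tie-breaking randomness `v`.
If `x` is a label of the sketch, its bin's count is incremented; otherwise a
minimal bin (count `N̂_min`) is selected, its count is incremented, and its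
label is replaced by `x` iff `u < 1/(N̂_min + 1)` (so a uniform `u` on `[0,1)`
replaces the label with probability `1/(N̂_min+1)`; taking `u = 0` makes the
replacement always happen, which is the Deterministic Space Saving update). -/
noncomputable def ssUpdate {m : ℕ} (x : ℕ) (u v : ℝ) (s : SSState m) : SSState m :=
  if ∃ j, (s j).1 = some x then
    fun j => if (s j).1 = some x then (some x, (s j).2 + 1) else s j
  else
    match pickMin s v with
    | none => s
    | some j₀ =>
        Function.update s j₀
          ((if u < 1 / (((s j₀).2 : ℝ) + 1) then some x else (s j₀).1), (s j₀).2 + 1)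

/-- The sketch state after `t` stream elements, where the `r`-th element
(0-indexed) is `x r`, with randomness sequences `u` (label replacement)
and `v` (tie breaking). -/
noncomputable def ssRun (m : ℕ) (x : ℕ → ℕ) (u v : ℕ → ℝ) : ℕ → SSState m
  | 0 => initState m
  | t + 1 => ssUpdate (x t) (u t) (v t) (ssRun m x u v t)

/-- Estimated count `N̂_i` of item `i`: the count of the bin labeled `i`,
or `0` if no bin is labeled `i`. -/
def ssEst {m : ℕ} (s : SSState m) (i : ℕ) : ℕ :=
  ∑ j, if (s j).1 = some i then (s j).2 else 0

/-- `Z_i = 1`: item `i` is one of the labels of the sketch. -/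
def isLabel {m : ℕ} (s : SSState m) (i : ℕ) : Prop := ∃ j, (s j).1 = some i

/-- True count `n_i(t)` of item `i` among the first `t` stream elements. -/
def trueCount (x : ℕ → ℕ) (i t : ℕ) : ℕ :=
  ((Finset.range t).filter fun r => x r = i).card

/-- The uniform distribution on `[0,1)`. -/
noncomputable def unif01 : Measure ℝ := volume.restrict (Set.Ico (0:ℝ) 1)

/-- The law on `ℕ` of a discrete item distribution with probabilities `p`. -/
noncomputable def itemLaw (p : ℕ → ℝ) : Measure ℕ :=
  Measure.sum fun i => ENNReal.ofReal (p i) • Measure.dirac i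

section

variable {m : ℕ}

theorem pickMin_count_le {s : SSState m} {v : ℝ} {j₀ : Fin m} (h : pickMin s v = some j₀)
    (k : Fin m) : (s j₀).2 ≤ (s k).2 := by
  have hmem := List.mem_of_getElem? h
  rw [Finset.mem_sort] at hmem
  exact (Finset.mem_filter.1 hmem).2 k

theorem minCount_eq_of_pickMin {s : SSState m} {v : ℝ} {j₀ : Fin m}
    (h : pickMin s v = some j₀) : minCount s = (s j₀).2 :=
  have : Nonempty (Fin m) := ⟨j₀⟩
  le_antisymm (ciInf_le (OrderBot.bddBelow _) j₀) (le_ciInf (pickMin_count_le h))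

theorem ssEst_update (s : SSState m) (j : Fin m) (l : Option ℕ) (c i : ℕ) :
    (ssEst (Function.update s j (l, c)) i : ℝ)
      = ssEst s i + ((if l = some i then c else 0 : ℕ) : ℝ)
          - ((if (s j).1 = some i then (s j).2 else 0 : ℕ) : ℝ) := by
  have hsum : ssEst (Function.update s j (l, c)) i + (if (s j).1 = some i then (s j).2 else 0)
      = ssEst s i + if l = some i then c else 0 := by
    simp only [ssEst, Function.apply_update (fun _ (p : Option ℕ × ℕ) =>
      if p.1 = some i then p.2 else 0), Finset.sum_update_of_mem (Finset.mem_univ j)]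
    rw [← Finset.add_sum_erase _ _ (Finset.mem_univ j)]
    simp only [Finset.sdiff_singleton_eq_erase]
    ring
  rw [eq_sub_iff_add_eq, ← Nat.cast_add, hsum, Nat.cast_add]

theorem ssUpdate_of_label {s : SSState m}
    (hs : ∀ (j k : Fin m) (a : ℕ), (s j).1 = some a → (s k).1 = some a → j = k)
    {x : ℕ} {j₁ : Fin m} (hj₁ : (s j₁).1 = some x) (u v : ℝ) :
    ssUpdate x u v s = Function.update s j₁ ((s j₁).1, (s j₁).2 + 1) := by
  rw [ssUpdate, if_pos ⟨j₁, hj₁⟩]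
  funext j
  by_cases hj : j = j₁
  · subst hj; simp [hj₁]
  · rw [Function.update_of_ne hj, if_neg fun h => hj (hs j j₁ x h hj₁)]

theorem ssUpdate_of_not_isLabel {s : SSState m} {x : ℕ} (hx : ¬ isLabel s x) {v : ℝ}
    {j₀ : Fin m} (hj₀ : pickMin s v = some j₀) (u : ℝ) :
    ssUpdate x u v s = Function.update s j₀
      ((if u < 1 / (((s j₀).2 : ℝ) + 1) then some x else (s j₀).1), (s j₀).2 + 1) := by
  rw [ssUpdate, if_neg (show ¬ ∃ j, (s j).1 = some x from hx), hj₀]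

/-- The martingale increment `D_i(t+1)`: the arrival of `x` raises `n_i` by `[x = i]`. -/
noncomputable def ssIncrement (s : SSState m) (x i : ℕ) (u v : ℝ) : ℝ :=
  (ssEst (ssUpdate x u v s) i : ℝ) - ssEst s i - if x = i then 1 else 0

theorem ssIncrement_eq_zero_of_isLabel {s : SSState m}
    (hs : ∀ (j k : Fin m) (a : ℕ), (s j).1 = some a → (s k).1 = some a → j = k)
    {x : ℕ} (hx : isLabel s x) (i : ℕ) (u v : ℝ) : ssIncrement s x i u v = 0 := by
  obtain ⟨j₁, hj₁⟩ := hx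
  rw [ssIncrement, ssUpdate_of_label hs hj₁, ssEst_update, hj₁]
  by_cases hxi : x = i
  · simp only [hxi, if_true, Nat.cast_add, Nat.cast_one]
    ring
  · simp [hxi]

theorem ssIncrement_eq_zero_of_not_isLabel {s : SSState m} {x i : ℕ} (hx : ¬ isLabel s x)
    (hxi : x ≠ i) {v : ℝ} {j₀ : Fin m} (hj₀ : pickMin s v = some j₀)
    (hj₀i : (s j₀).1 ≠ some i) (u : ℝ) : ssIncrement s x i u v = 0 := by
  rw [ssIncrement, ssUpdate_of_not_isLabel hx hj₀, ssEst_update]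
  split_ifs <;> simp_all

theorem ssIncrement_sq_of_not_isLabel {s : SSState m} {x i : ℕ} (hx : ¬ isLabel s x) {v : ℝ}
    {j₀ : Fin m} (hj₀ : pickMin s v = some j₀) (h : x = i ∨ (s j₀).1 = some i) (u : ℝ) :
    ssIncrement s x i u v ^ 2
      = if u < 1 / (((s j₀).2 : ℝ) + 1) then ((s j₀).2 : ℝ) ^ 2 else 1 := by
  rw [ssIncrement, ssUpdate_of_not_isLabel hx hj₀, ssEst_update]
  generalize 1 / (((s j₀).2 : ℝ) + 1) = p
  rcases h with rfl | hj₀i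
  · have hj₀x : (s j₀).1 ≠ some x := fun h => hx ⟨j₀, h⟩
    by_cases hu : u < p <;> simp [hu, hj₀x]
  · have hxi : x ≠ i := by rintro rfl; exact hx ⟨j₀, hj₀i⟩
    by_cases hu : u < p <;>
      simp only [hu, hxi, hj₀i, if_true, if_false, Option.some_inj, Nat.cast_zero, Nat.cast_add,
        Nat.cast_one] <;> ring

theorem setIntegral_Ico_ite_lt (p a b : ℝ) (hp₀ : 0 ≤ p) (hp₁ : p ≤ 1) :
    ∫ u in Set.Ico (0 : ℝ) 1, (if u < p then a else b) = p * a + (1 - p) * b := by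
  have ha : Set.EqOn (fun u : ℝ => if u < p then a else b) (fun _ => a) (Set.Ico 0 p) :=
    fun u hu => if_pos hu.2
  have hb : Set.EqOn (fun u : ℝ => if u < p then a else b) (fun _ => b) (Set.Ico p 1) :=
    fun u hu => if_neg (not_lt.2 hu.1)
  rw [← Set.Ico_union_Ico_eq_Ico hp₀ hp₁, setIntegral_union Set.Ico_disjoint_Ico_same
      measurableSet_Ico ((integrableOn_const measure_Ico_lt_top.ne).congr_fun ha.symm
        measurableSet_Ico)
      ((integrableOn_const measure_Ico_lt_top.ne).congr_fun hb.symm measurableSet_Ico),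
    setIntegral_congr_fun measurableSet_Ico ha, setIntegral_congr_fun measurableSet_Ico hb]
  simp [hp₀, hp₁]

theorem setIntegral_Ico_ite_lt_one_div_succ {c : ℝ} (hc : 0 ≤ c) :
    ∫ u in Set.Ico (0 : ℝ) 1, (if u < 1 / (c + 1) then c ^ 2 else 1) = c := by
  have hc₁ : 0 < c + 1 := by positivity
  rw [setIntegral_Ico_ite_lt _ _ _ (by positivity) (by rw [div_le_one hc₁]; linarith)]
  field_simp
  ring

end

theorem unbiased_space_saving_increment_second_moment_general
    (m : ℕ) (s : SSState m)
    (hdistinct : ∀ (j k : Fin m) (a : ℕ), (s j).1 = some a → (s k).1 = some a → j = k)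
    (x i : ℕ) (v : ℝ) (j₀ : Fin m) (hj₀ : pickMin s v = some j₀) :
    (((x = i ∧ ¬ isLabel s i) ∨ (¬ isLabel s x ∧ (s j₀).1 = some i)) →
      ∫ u in Set.Ico (0:ℝ) 1,
          ((ssEst (ssUpdate x u v s) i : ℝ) - (ssEst s i : ℝ)
              - (if x = i then 1 else 0)) ^ 2
        = (minCount s : ℝ))
    ∧ (¬ ((x = i ∧ ¬ isLabel s i) ∨ (¬ isLabel s x ∧ (s j₀).1 = some i)) →
      ∀ u ∈ Set.Ico (0:ℝ) 1,
        (ssEst (ssUpdate x u v s) i : ℝ) - (ssEst s i : ℝ)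
            - (if x = i then 1 else 0) = 0) := by
  refine ⟨fun h => ?_, fun h u _ => ?_⟩
  · have hx : ¬ isLabel s x := by
      rcases h with ⟨rfl, hx⟩ | ⟨hx, -⟩ <;> exact hx
    rw [minCount_eq_of_pickMin hj₀,
      ← setIntegral_Ico_ite_lt_one_div_succ (c := ((s j₀).2 : ℝ)) (Nat.cast_nonneg _)]
    exact setIntegral_congr_fun measurableSet_Ico fun u _ =>
      ssIncrement_sq_of_not_isLabel hx hj₀ (h.imp And.left And.right) u
  · by_cases hx : isLabel s x
    · exact ssIncrement_eq_zero_of_isLabel hdistinct hx i u v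
    · exact ssIncrement_eq_zero_of_not_isLabel hx (fun hxi => h (.inl ⟨hxi, hxi ▸ hx⟩)) hj₀
        (fun hj₀i => h (.inr ⟨hx, hj₀i⟩)) u

/-- One step of Unbiased Space Saving: fix an item `i`, a
sketch state `s` (with pairwise distinct labels, as is invariant for the
algorithm) reached after `t` elements, the identity `x` of the arriving
`(t+1)`-st item, the tie-breaking randomness `v`, and let `j₀` be the selected
minimal bin.  Let `D u = N̂_i(t+1) − N̂_i(t) − (n_i(t+1) − n_i(t))` be the
martingale increment when the label-replacement randomness is `u`.  If
(a) the arriving item is `i` and `i` is not a label of the sketch, or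
(b) the arriving item is not a label of the sketch and the selected minimal
bin is labeled `i`, then the conditional second moment (over the uniform coin
`u`) satisfies `E[D²] = N̂_min(t)`, the count of the selected minimal bin
before the update; in all other cases `D = 0`. -/
theorem unbiased_space_saving_increment_second_moment
    (m : ℕ) (hm : 0 < m) (s : SSState m)
    (hdistinct : ∀ (j k : Fin m) (a : ℕ), (s j).1 = some a → (s k).1 = some a → j = k)
    (x i : ℕ) (v : ℝ) (j₀ : Fin m) (hj₀ : pickMin s v = some j₀) :
    (((x = i ∧ ¬ isLabel s i) ∨ (¬ isLabel s x ∧ (s j₀).1 = some i)) →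
      ∫ u in Set.Ico (0:ℝ) 1,
          ((ssEst (ssUpdate x u v s) i : ℝ) - (ssEst s i : ℝ)
              - (if x = i then 1 else 0)) ^ 2
        = (minCount s : ℝ))
    ∧ (¬ ((x = i ∧ ¬ isLabel s i) ∨ (¬ isLabel s x ∧ (s j₀).1 = some i)) →
      ∀ u ∈ Set.Ico (0:ℝ) 1,
        (ssEst (ssUpdate x u v s) i : ℝ) - (ssEst s i : ℝ)
            - (if x = i then 1 else 0) = 0) :=
  unbiased_space_saving_increment_second_moment_general m s hdistinct x i v j₀ hj₀
end

section
/- Let α = Σ_{j > m} p_j be the total probability of items outside the top m. Then for any α' < α, almost surely N̂_min(t) > α' t / m for all sufficiently large t, where N̂_min(t) is the minimal bin count of the Unbiased Space Saving sketch after t elements. -/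
/-!
Call an arrival a miss if it is not a label of the current sketch. The potential
`∑ⱼ min(Nⱼ, N̂_min + 1)` never decreases, grows at every miss (the bin picked has count `N̂_min`)
and is at most `m (N̂_min + 1)`, so there are at most `m (N̂_min(t) + 1)` misses among the first
`t` arrivals.

Conversely, a state has at most `m` labels, of total probability at most
`p_0 + ⋯ + p_{m-1} = 1 - α`. The hit indicators centred at these conditional means are bounded and
pairwise orthogonal, so the number of misses is at least `α t` minus a sum `M_t` with
`E[M_t²] ≤ t`. Chebyshev's inequality along `t = k²` and Borel–Cantelli give `|M_{k²}| < ε k²`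
eventually, almost surely, and the miss count, being monotone, interpolates between squares.
-/

open MeasureTheory ProbabilityTheory Filter

open Finset

section Deterministic

variable {m : ℕ}

lemma minCount_le (s : SSState m) (j : Fin m) : minCount s ≤ (s j).2 :=
  Nat.sInf_le ⟨j, rfl⟩

lemma le_minCount (hm : 0 < m) {s : SSState m} {a : ℕ} (h : ∀ j, a ≤ (s j).2) :
    a ≤ minCount s :=
  have : Nonempty (Fin m) := ⟨⟨0, hm⟩⟩
  le_ciInf h

lemma exists_pickMin_eq_some (hm : 0 < m) (s : SSState m) (v : ℝ) :
    ∃ j₀, pickMin s v = some j₀ ∧ (s j₀).2 = minCount s := by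
  have : Nonempty (Fin m) := ⟨⟨0, hm⟩⟩
  obtain ⟨j, -, hj⟩ := exists_min_image univ (fun j => (s j).2) univ_nonempty
  set l := ({j | ∀ k, (s j).2 ≤ (s k).2} : Finset (Fin m)).sort (· ≤ ·) with hl
  have hlen : 0 < l.length := by
    rw [hl, length_sort, card_pos]
    exact ⟨j, by simpa using hj⟩
  set i := min (⌊v * l.length⌋.toNat) (l.length - 1)
  have hi : i < l.length := by omega
  have hmin : ∀ k, (s l[i]).2 ≤ (s k).2 := by
    have hmem : l[i] ∈ l := List.getElem_mem hi
    generalize l[i] = j at hmem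
    rw [hl, mem_sort, mem_filter] at hmem
    exact hmem.2
  exact ⟨l[i], List.getElem?_eq_getElem hi, le_antisymm (le_minCount hm hmin) (minCount_le s _)⟩

def labelSet (s : SSState m) : Finset ℕ :=
  univ.biUnion fun j => (s j).1.toFinset

lemma mem_labelSet {s : SSState m} {i : ℕ} : i ∈ labelSet s ↔ ∃ j, (s j).1 = some i := by
  simp [labelSet, Option.mem_toFinset]

lemma card_labelSet_le (s : SSState m) : #(labelSet s) ≤ m :=
  card_biUnion_le.trans <| (sum_le_sum fun j _ => show #(s j).1.toFinset ≤ 1 by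
    cases (s j).1 <;> simp).trans (by simp)

lemma ssUpdate_of_mem_labelSet {x : ℕ} {s : SSState m} (hx : x ∈ labelSet s) (u v : ℝ) :
    ssUpdate x u v s = fun j => if (s j).1 = some x then (some x, (s j).2 + 1) else s j :=
  if_pos (mem_labelSet.1 hx)

lemma ssUpdate_of_pickMin_eq_some {x : ℕ} {s : SSState m} (hx : x ∉ labelSet s) {u v : ℝ}
    {j₀ : Fin m} (hj₀ : pickMin s v = some j₀) :
    ssUpdate x u v s = Function.update s j₀
      ((if u < 1 / (((s j₀).2 : ℝ) + 1) then some x else (s j₀).1), (s j₀).2 + 1) := by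
  rw [ssUpdate, if_neg (mt mem_labelSet.2 hx), hj₀]

lemma count_le_ssUpdate (x : ℕ) (u v : ℝ) (s : SSState m) (j : Fin m) :
    (s j).2 ≤ (ssUpdate x u v s j).2 := by
  by_cases hx : x ∈ labelSet s
  · rw [ssUpdate_of_mem_labelSet hx]
    dsimp only
    split_ifs <;> simp
  · rcases hpick : pickMin s v with _ | j₀
    · rw [ssUpdate, if_neg (mt mem_labelSet.2 hx), hpick]
    · rw [ssUpdate_of_pickMin_eq_some hx hpick]
      rcases eq_or_ne j j₀ with rfl | hj
      · simp
      · rw [Function.update_of_ne hj]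

lemma minCount_le_minCount_ssUpdate (hm : 0 < m) (x : ℕ) (u v : ℝ) (s : SSState m) :
    minCount s ≤ minCount (ssUpdate x u v s) :=
  le_minCount hm fun j => (minCount_le s j).trans (count_le_ssUpdate x u v s j)

noncomputable def cappedCountSum (s : SSState m) : ℕ :=
  ∑ j, min (s j).2 (minCount s + 1)

lemma cappedCountSum_le (s : SSState m) : cappedCountSum s ≤ m * (minCount s + 1) :=
  (sum_le_sum fun j _ => min_le_right _ _).trans (by simp)

lemma min_count_le_ssUpdate (hm : 0 < m) (x : ℕ) (u v : ℝ) (s : SSState m) (j : Fin m) :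
    min (s j).2 (minCount s + 1)
      ≤ min (ssUpdate x u v s j).2 (minCount (ssUpdate x u v s) + 1) :=
  min_le_min (count_le_ssUpdate x u v s j)
    (Nat.succ_le_succ (minCount_le_minCount_ssUpdate hm x u v s))

lemma cappedCountSum_le_ssUpdate (hm : 0 < m) (x : ℕ) (u v : ℝ) (s : SSState m) :
    cappedCountSum s ≤ cappedCountSum (ssUpdate x u v s) :=
  sum_le_sum fun j _ => min_count_le_ssUpdate hm x u v s j

/-- A miss raises a bin of minimal count, whose capped count therefore goes up by one. -/
lemma cappedCountSum_lt_ssUpdate (hm : 0 < m) {x : ℕ} {s : SSState m} (hx : x ∉ labelSet s)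
    (u v : ℝ) : cappedCountSum s < cappedCountSum (ssUpdate x u v s) := by
  obtain ⟨j₀, hpick, hj₀⟩ := exists_pickMin_eq_some hm s v
  refine sum_lt_sum (fun j _ => min_count_le_ssUpdate hm x u v s j) ⟨j₀, mem_univ _, ?_⟩
  have hraise : (ssUpdate x u v s j₀).2 = minCount s + 1 := by
    rw [ssUpdate_of_pickMin_eq_some hx hpick, Function.update_self, hj₀]
  have hmin := minCount_le_minCount_ssUpdate hm x u v s
  rw [hj₀, hraise]
  omega

noncomputable def missCount (m : ℕ) (x : ℕ → ℕ) (u v : ℕ → ℝ) (t : ℕ) : ℕ :=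
  #{r ∈ range t | x r ∉ labelSet (ssRun m x u v r)}

lemma missCount_mono (x : ℕ → ℕ) (u v : ℕ → ℝ) : Monotone (missCount m x u v) :=
  fun _ _ h => card_le_card (filter_subset_filter _ (range_subset_range.2 h))

lemma missCount_le_cappedCountSum (hm : 0 < m) (x : ℕ → ℕ) (u v : ℕ → ℝ) (t : ℕ) :
    missCount m x u v t ≤ cappedCountSum (ssRun m x u v t) := by
  induction t with
  | zero => simp [missCount]
  | succ t ih =>
    show _ ≤ cappedCountSum (ssUpdate (x t) (u t) (v t) (ssRun m x u v t))
    rw [missCount, range_add_one, filter_insert]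
    split_ifs with hx
    · exact ih.trans (cappedCountSum_le_ssUpdate hm _ _ _ _)
    · exact (card_insert_le _ _).trans
        (Nat.succ_le_of_lt (ih.trans_lt (cappedCountSum_lt_ssUpdate hm hx _ _)))

lemma missCount_le (hm : 0 < m) (x : ℕ → ℕ) (u v : ℕ → ℝ) (t : ℕ) :
    missCount m x u v t ≤ m * (minCount (ssRun m x u v t) + 1) :=
  (missCount_le_cappedCountSum hm x u v t).trans (cappedCountSum_le _)

end Deterministic

section LabelMass

variable {p : ℕ → ℝ}

lemma summable_of_tsum_ne_zero {ι : Type*} {f : ι → ℝ} (h : ∑' i, f i ≠ 0) : Summable f :=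
  not_not.1 (mt tsum_eq_zero_of_not_summable h)

lemma tsum_ite_le_eq_tsum_sub_sum (hp : Summable p) (m : ℕ) :
    ∑' j, (if m ≤ j then p j else 0) = ∑' j, p j - ∑ j ∈ range m, p j := by
  have hfin : Summable fun j => if j < m then p j else 0 :=
    summable_of_ne_finset_zero (s := range m) fun j hj => if_neg (by simpa using hj)
  have hfin_eq : ∑' j, (if j < m then p j else 0) = ∑ j ∈ range m, p j := by
    rw [tsum_eq_sum (s := range m) fun j hj => if_neg (by simpa using hj)]
    exact sum_congr rfl fun j hj => if_pos (mem_range.1 hj)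
  have hsplit : (fun j => if m ≤ j then p j else 0) = fun j => p j - if j < m then p j else 0 := by
    funext j
    split_ifs <;> first | omega | ring
  rw [hsplit, hp.tsum_sub hfin, hfin_eq]

lemma sum_le_sum_range_card_of_antitone (hp : Antitone p) (S : Finset ℕ) :
    ∑ i ∈ S, p i ≤ ∑ i ∈ range #S, p i := by
  induction S using Finset.induction_on_max with
  | empty => simp
  | insert a S ha ih =>
    have haS : a ∉ S := fun h => lt_irrefl a (ha a h)
    have hcard : #S ≤ a := by
      simpa using card_le_card (fun b hb => mem_range.2 (ha b hb) : S ⊆ range a)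
    rw [sum_insert haS, card_insert_of_notMem haS, sum_range_succ, add_comm]
    exact add_le_add ih (hp hcard)

lemma sum_le_sum_range_of_antitone (hp0 : ∀ i, 0 ≤ p i) (hp : Antitone p) {S : Finset ℕ}
    {n : ℕ} (hS : #S ≤ n) : ∑ i ∈ S, p i ≤ ∑ i ∈ range n, p i :=
  (sum_le_sum_range_card_of_antitone hp S).trans <|
    sum_le_sum_of_subset_of_nonneg (range_subset_range.2 hS) fun i _ _ => hp0 i

variable {m : ℕ}

noncomputable def labelMass (p : ℕ → ℝ) (s : SSState m) : ℝ :=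
  ∑ i ∈ labelSet s, p i

lemma labelMass_nonneg (hp0 : ∀ i, 0 ≤ p i) (s : SSState m) : 0 ≤ labelMass p s :=
  sum_nonneg fun i _ => hp0 i

lemma labelMass_le_one_sub_tail (hp0 : ∀ i, 0 ≤ p i) (hpmono : Antitone p)
    (hpsum : ∑' i, p i = 1) (s : SSState m) :
    labelMass p s ≤ 1 - ∑' j, if m ≤ j then p j else 0 := by
  rw [tsum_ite_le_eq_tsum_sub_sum (summable_of_tsum_ne_zero (by simp [hpsum])), hpsum,
    sub_sub_cancel]
  exact sum_le_sum_range_of_antitone hp0 hpmono (card_labelSet_le s)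

lemma labelMass_le_one (hp0 : ∀ i, 0 ≤ p i) (hpmono : Antitone p) (hpsum : ∑' i, p i = 1)
    (s : SSState m) : labelMass p s ≤ 1 :=
  (labelMass_le_one_sub_tail hp0 hpmono hpsum s).trans <|
    sub_le_self _ (tsum_nonneg fun j => by split_ifs <;> simp [hp0])

end LabelMass

section Measurability

instance {α : Type*} : MeasurableSpace (Option α) := ⊤

instance {α : Type*} : DiscreteMeasurableSpace (Option α) := ⟨fun _ => trivial⟩

variable {m : ℕ}

lemma measurable_pickMin (s : SSState m) : Measurable (pickMin s) := by
  let l := ({j | ∀ k, (s j).2 ≤ (s k).2} : Finset (Fin m)).sort (· ≤ ·)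
  exact (measurable_of_countable fun n : ℤ => l[min n.toNat (l.length - 1)]?).comp
    (Int.measurable_floor.comp (measurable_id.mul_const _))

lemma measurable_ssUpdate :
    Measurable fun q : (ℕ × ℝ × ℝ) × SSState m => ssUpdate q.1.1 q.1.2.1 q.1.2.2 q.2 := by
  refine measurable_from_prod_countable_left fun s => ?_
  refine measurable_from_prod_countable_right fun x => ?_
  by_cases hx : x ∈ labelSet s
  · simp only [ssUpdate_of_mem_labelSet hx]
    exact measurable_const
  · let raise : ℝ × Option (Fin m) → SSState m := fun q => q.2.elim s fun j₀ =>
      Function.update s j₀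
        ((if q.1 < 1 / (((s j₀).2 : ℝ) + 1) then some x else (s j₀).1), (s j₀).2 + 1)
    have hraise : Measurable raise := by
      refine measurable_from_prod_countable_left fun o => ?_
      cases o with
      | none => exact measurable_const
      | some j₀ =>
        exact (measurable_update s).comp
          ((Measurable.ite measurableSet_Iio measurable_const measurable_const).prodMk
            measurable_const)
    have hfun : (fun uv : ℝ × ℝ => ssUpdate x uv.1 uv.2 s) =
        fun uv => raise (uv.1, pickMin s uv.2) := by
      funext uv
      rw [ssUpdate, if_neg (mt mem_labelSet.2 hx)]
      cases pickMin s uv.2 <;> rfl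
    rw [hfun]
    exact hraise.comp (measurable_fst.prodMk ((measurable_pickMin s).comp measurable_snd))

lemma measurable_ssRun {Ω : Type*} {mΩ : MeasurableSpace Ω} {X : ℕ → Ω → ℕ} {U V : ℕ → Ω → ℝ}
    {t : ℕ} (h : ∀ r < t, Measurable fun ω => (X r ω, U r ω, V r ω)) :
    Measurable fun ω => ssRun m (X · ω) (U · ω) (V · ω) t := by
  induction t with
  | zero => exact measurable_const
  | succ t ih =>
    exact measurable_ssUpdate.comp
      ((h t t.lt_succ_self).prodMk (ih fun r hr => h r (hr.trans t.lt_succ_self)))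

end Measurability

section ItemLaw

variable {p : ℕ → ℝ}

lemma itemLaw_apply (A : Set ℕ) :
    itemLaw p A = ∑' i, A.indicator (fun i => ENNReal.ofReal (p i)) i := by
  rw [itemLaw, Measure.sum_apply_of_countable]
  congr 1
  funext i
  by_cases hi : i ∈ A <;> simp [hi]

lemma isProbabilityMeasure_itemLaw (hp0 : ∀ i, 0 ≤ p i) (hpsum : ∑' i, p i = 1) :
    IsProbabilityMeasure (itemLaw p) := by
  refine ⟨?_⟩
  rw [itemLaw_apply, Set.indicator_univ,
    ← ENNReal.ofReal_tsum_of_nonneg hp0 (summable_of_tsum_ne_zero (by simp [hpsum])), hpsum,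
    ENNReal.ofReal_one]

lemma itemLaw_real_finset (hp0 : ∀ i, 0 ≤ p i) (S : Finset ℕ) :
    (itemLaw p).real S = ∑ i ∈ S, p i := by
  rw [measureReal_def, itemLaw_apply, ← sum_eq_tsum_indicator,
    ← ENNReal.ofReal_sum_of_nonneg fun i _ => hp0 i,
    ENNReal.toReal_ofReal (sum_nonneg fun i _ => hp0 i)]

lemma isProbabilityMeasure_unif01 : IsProbabilityMeasure unif01 :=
  ⟨by simp [unif01]⟩

end ItemLaw

section Probability

variable {Ω γ δ : Type*} {mΩ : MeasurableSpace Ω} [MeasurableSpace γ] [MeasurableSpace δ]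
  {P : Measure Ω}

/-- `hA` says that `A` is a measurable function of the `Z i` with `i < s`. -/
lemma ProbabilityTheory.iIndepFun.indepFun_of_measurable_of_lt {Z : ℕ → Ω → γ}
    (hZ : ∀ i, Measurable (Z i)) (hind : iIndepFun Z P) {s : ℕ} {A : Ω → δ}
    (hA : ∀ {mΩ' : MeasurableSpace Ω}, (∀ i < s, Measurable[mΩ'] (Z i)) → Measurable[mΩ'] A) :
    A ⟂ᵢ[P] Z s := by
  have h := indep_iSup_of_disjoint (fun i => (hZ i).comap_le) hind.iIndep
    (Set.disjoint_singleton_right.2 (lt_irrefl s) : Disjoint (Set.Iio s) {s})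
  rw [_root_.iSup_singleton] at h
  refine (IndepFun_iff_Indep _ _ _).2 (indep_of_indep_of_le_left h (hA fun i hi => ?_).comap_le)
  exact Measurable.of_comap_le (le_iSup₂ (f := fun i (_ : i ∈ Set.Iio s) =>
    MeasurableSpace.comap (Z i) ‹_›) i hi)

lemma ProbabilityTheory.IndepFun.integral_comp_eq_zero [IsFiniteMeasure P] {A : Ω → γ}
    {Y : Ω → δ} (hAY : A ⟂ᵢ[P] Y) (hA : Measurable A) (hY : Measurable Y) {φ : γ × δ → ℝ}
    (hφ : Measurable φ) (hint : Integrable (fun ω => φ (A ω, Y ω)) P)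
    (h0 : ∀ a, ∫ y, φ (a, y) ∂(P.map Y) = 0) : ∫ ω, φ (A ω, Y ω) ∂P = 0 := by
  have hmap := (indepFun_iff_map_prod_eq_prod_map_map hA.aemeasurable hY.aemeasurable).1 hAY
  have hAYm := (hA.prodMk hY).aemeasurable (μ := P)
  have hint' : Integrable φ ((P.map A).prod (P.map Y)) := by
    rw [← hmap]
    exact (integrable_map_measure hφ.aestronglyMeasurable hAYm).2 hint
  rw [← integral_map hAYm hφ.aestronglyMeasurable, hmap, integral_prod _ hint']
  simp [h0]

lemma integral_sq_sum_le_of_orthogonal [IsProbabilityMeasure P] {Y : ℕ → Ω → ℝ}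
    (hY : ∀ r, Measurable (Y r)) (hbd : ∀ r ω, |Y r ω| ≤ 1)
    (horth : ∀ r s, r < s → ∫ ω, Y r ω * Y s ω ∂P = 0) (t : ℕ) :
    ∫ ω, (∑ r ∈ range t, Y r ω) ^ 2 ∂P ≤ t := by
  have hint : ∀ r s, Integrable (fun ω => Y r ω * Y s ω) P := fun r s =>
    .of_bound ((hY r).mul (hY s)).aestronglyMeasurable 1 <| ae_of_all _ fun ω => by
      rw [Real.norm_eq_abs, abs_mul]
      exact mul_le_one₀ (hbd r ω) (abs_nonneg _) (hbd s ω)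
  have hcross : ∀ r s, r ≠ s → ∫ ω, Y r ω * Y s ω ∂P = 0 := fun r s hrs => by
    rcases hrs.lt_or_gt with h | h
    · exact horth r s h
    · simpa only [mul_comm] using horth s r h
  have hdiag : ∀ r, ∫ ω, Y r ω * Y r ω ∂P ≤ 1 := fun r => by
    refine (integral_mono (hint r r) (integrable_const 1) fun ω => ?_).trans (by simp)
    rw [← abs_mul_abs_self]
    exact mul_le_one₀ (hbd r ω) (abs_nonneg _) (hbd r ω)
  simp_rw [sq, sum_mul_sum]
  rw [integral_finsetSum _ fun r _ => integrable_finsetSum _ fun s _ => hint r s]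
  calc ∑ r ∈ range t, ∫ ω, ∑ s ∈ range t, Y r ω * Y s ω ∂P
      = ∑ r ∈ range t, ∫ ω, Y r ω * Y r ω ∂P := sum_congr rfl fun r hr => by
        rw [integral_finsetSum _ fun s _ => hint r s,
          sum_eq_single_of_mem r hr fun s _ hs => hcross r s (Ne.symm hs)]
    _ ≤ ∑ r ∈ range t, 1 := sum_le_sum fun r _ => hdiag r
    _ = t := by simp

lemma measureReal_le_abs_le_integral_sq_div {f : Ω → ℝ} (hf : Integrable (fun ω => f ω ^ 2) P)
    {c : ℝ} (hc : 0 < c) : P.real {ω | c ≤ |f ω|} ≤ (∫ ω, f ω ^ 2 ∂P) / c ^ 2 := by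
  have hset : {ω | c ≤ |f ω|} = {ω | c ^ 2 ≤ f ω ^ 2} := by
    ext ω
    show c ≤ |f ω| ↔ c ^ 2 ≤ f ω ^ 2
    rw [← sq_abs (f ω), pow_le_pow_iff_left₀ hc.le (abs_nonneg _) two_ne_zero]
  rw [hset, le_div_iff₀ (by positivity), mul_comm]
  exact mul_meas_ge_le_integral_of_nonneg (ae_of_all _ fun ω => sq_nonneg (f ω)) hf _

lemma ae_eventually_abs_lt_mul_sq [IsFiniteMeasure P] {M : ℕ → Ω → ℝ}
    (hint : ∀ t, Integrable (fun ω => M t ω ^ 2) P) (hvar : ∀ t, ∫ ω, M t ω ^ 2 ∂P ≤ t)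
    {ε : ℝ} (hε : 0 < ε) : ∀ᵐ ω ∂P, ∀ᶠ k : ℕ in atTop, |M (k ^ 2) ω| < ε * k ^ 2 := by
  set B : ℕ → Set Ω := fun k => {ω | ε * ((k + 1 : ℕ) : ℝ) ^ 2 ≤ |M ((k + 1) ^ 2) ω|}
  have hB : ∀ k, P (B k) ≤ ENNReal.ofReal (ε⁻¹ ^ 2 * (1 / ((k + 1 : ℕ) : ℝ) ^ 2)) := fun k => by
    rw [← ofReal_measureReal]
    refine ENNReal.ofReal_le_ofReal
      ((measureReal_le_abs_le_integral_sq_div (hint _) (by positivity)).trans ?_)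
    have hk : (0 : ℝ) < ((k + 1 : ℕ) : ℝ) := by positivity
    calc (∫ ω, M ((k + 1) ^ 2) ω ^ 2 ∂P) / (ε * ((k + 1 : ℕ) : ℝ) ^ 2) ^ 2
        ≤ (((k + 1) ^ 2 : ℕ) : ℝ) / (ε * ((k + 1 : ℕ) : ℝ) ^ 2) ^ 2 := by gcongr; exact hvar _
      _ = ε⁻¹ ^ 2 * (1 / ((k + 1 : ℕ) : ℝ) ^ 2) := by field_simp; push_cast; ring
  have hsum : ∑' k, P (B k) ≠ ⊤ := by
    refine ne_top_of_le_ne_top ?_ (ENNReal.tsum_le_tsum hB)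
    rw [← ENNReal.ofReal_tsum_of_nonneg (fun k => by positivity)
      (((summable_nat_add_iff 1).2 (Real.summable_one_div_nat_pow.2 one_lt_two)).mul_left _)]
    exact ENNReal.ofReal_ne_top
  filter_upwards [ae_eventually_notMem hsum] with ω hω
  have hsucc : ∀ᶠ k in atTop, |M ((k + 1) ^ 2) ω| < ε * ((k + 1 : ℕ) : ℝ) ^ 2 :=
    hω.mono fun k hk => not_le.1 hk
  rw [← map_add_atTop_eq_nat 1]
  exact hsucc

lemma ae_eventually_abs_sum_lt_mul_sq_of_orthogonal [IsProbabilityMeasure P] {Y : ℕ → Ω → ℝ}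
    (hY : ∀ r, Measurable (Y r)) (hbd : ∀ r ω, |Y r ω| ≤ 1)
    (horth : ∀ r s, r < s → ∫ ω, Y r ω * Y s ω ∂P = 0) {ε : ℝ} (hε : 0 < ε) :
    ∀ᵐ ω ∂P, ∀ᶠ k : ℕ in atTop, |∑ r ∈ range (k ^ 2), Y r ω| < ε * k ^ 2 := by
  refine ae_eventually_abs_lt_mul_sq (M := fun t ω => ∑ r ∈ range t, Y r ω) (fun t => ?_)
    (integral_sq_sum_le_of_orthogonal hY hbd horth) hε
  have hsum : ∀ ω, |∑ r ∈ range t, Y r ω| ≤ t := fun ω =>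
    (abs_sum_le_sum_abs _ _).trans ((sum_le_sum fun r _ => hbd r ω).trans (by simp))
  refine .of_bound ((Finset.measurable_sum _ fun r _ => hY r).pow_const 2).aestronglyMeasurable
    ((t : ℝ) ^ 2) (ae_of_all _ fun ω => ?_)
  rw [Real.norm_eq_abs, abs_pow]
  exact pow_le_pow_left₀ (abs_nonneg _) (hsum ω) 2

lemma eventually_lt_of_eventually_mul_sq_le {f : ℕ → ℝ} (hf : Monotone f) {a b : ℝ} (hba : b < a)
    (C : ℝ) (h : ∀ᶠ k : ℕ in atTop, a * k ^ 2 ≤ f (k ^ 2)) :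
    ∀ᶠ t : ℕ in atTop, b * t + C < f t := by
  have hgrowth : ∀ᶠ k : ℕ in atTop, 2 * |b| * k + C < (a - b) * k ^ 2 := by
    have h' : Tendsto (fun k : ℕ => ((a - b) * k + -(2 * |b|)) * k + -C) atTop atTop :=
      tendsto_atTop_add_const_right _ _ <|
        (tendsto_atTop_add_const_right _ _ <| tendsto_natCast_atTop_atTop.const_mul_atTop
          (sub_pos.2 hba)).atTop_mul_atTop₀ tendsto_natCast_atTop_atTop
    exact (h'.eventually_gt_atTop 0).mono fun k hk => by linarith
  have hsqrt : Tendsto Nat.sqrt atTop atTop :=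
    tendsto_atTop_atTop.2 fun K => ⟨K ^ 2, fun t ht => Nat.le_sqrt'.2 ht⟩
  filter_upwards [hsqrt.eventually (h.and hgrowth)] with t ⟨hk, hgk⟩
  have hsqrt_le := Nat.sqrt_le' t
  have hle_sqrt := Nat.sqrt_le_add t
  generalize Nat.sqrt t = k at hk hgk hsqrt_le hle_sqrt
  have hlo : (k : ℝ) ^ 2 ≤ t := by exact_mod_cast hsqrt_le
  have hhi : (t : ℝ) ≤ k ^ 2 + 2 * k := by
    rw [sq]
    exact_mod_cast (by omega : t ≤ k * k + 2 * k)
  have hbt : b * t ≤ b * k ^ 2 + |b| * (2 * k) := by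
    have hsign := mul_le_mul_of_nonneg_right (le_abs_self b) (sub_nonneg.2 hlo)
    have hgap := mul_le_mul_of_nonneg_left (show (t : ℝ) - k ^ 2 ≤ 2 * k by linarith)
      (abs_nonneg b)
    linarith
  calc b * t + C < a * k ^ 2 := by linarith
    _ ≤ f (k ^ 2) := hk
    _ ≤ f t := hf hsqrt_le

end Probability

section HitNoise

variable {m : ℕ} {p : ℕ → ℝ}

noncomputable def hitDeviation (p : ℕ → ℝ) (s : SSState m) (i : ℕ) : ℝ :=
  (if i ∈ labelSet s then 1 else 0) - labelMass p s

lemma abs_hitDeviation_le_one (hp0 : ∀ i, 0 ≤ p i) (hpmono : Antitone p)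
    (hpsum : ∑' i, p i = 1) (s : SSState m) (i : ℕ) : |hitDeviation p s i| ≤ 1 := by
  have h0 := labelMass_nonneg hp0 s
  have h1 := labelMass_le_one hp0 hpmono hpsum s
  rw [hitDeviation, abs_le]
  split_ifs <;> constructor <;> linarith

lemma integral_hitDeviation_itemLaw (hp0 : ∀ i, 0 ≤ p i) (hpsum : ∑' i, p i = 1)
    (s : SSState m) : ∫ i, hitDeviation p s i ∂(itemLaw p) = 0 := by
  have := isProbabilityMeasure_itemLaw hp0 hpsum
  have hL : MeasurableSet (labelSet s : Set ℕ) := (labelSet s).finite_toSet.measurableSet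
  have hind :
      (fun i => if i ∈ labelSet s then (1 : ℝ) else 0) = (labelSet s : Set ℕ).indicator 1 := by
    funext i
    simp [Set.indicator_apply]
  simp only [hitDeviation]
  rw [integral_sub (by rw [hind]; exact (integrable_const 1).indicator hL) (integrable_const _),
    hind, integral_indicator_one hL, itemLaw_real_finset hp0, integral_const, probReal_univ,
    one_smul, labelMass, sub_self]

lemma tail_mul_sub_le_missCount {β : ℝ} (hβ : ∀ s : SSState m, labelMass p s ≤ 1 - β)
    (x : ℕ → ℕ) (u v : ℕ → ℝ) (t : ℕ) :
    β * t - ∑ r ∈ range t, hitDeviation p (ssRun m x u v r) (x r) ≤ missCount m x u v t := by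
  rw [missCount, natCast_card_filter]
  calc β * t - ∑ r ∈ range t, hitDeviation p (ssRun m x u v r) (x r)
      = ∑ r ∈ range t, (β - hitDeviation p (ssRun m x u v r) (x r)) := by
        rw [sum_sub_distrib, sum_const, card_range, nsmul_eq_mul, mul_comm]
    _ ≤ _ := sum_le_sum fun r _ => by
        have := hβ (ssRun m x u v r)
        rw [hitDeviation]
        split_ifs <;> linarith

lemma measurable_hitDeviation : Measurable fun q : SSState m × ℕ => hitDeviation p q.1 q.2 :=
  .of_discrete

variable {Ω : Type*}

noncomputable def hitNoise (p : ℕ → ℝ) (m : ℕ) (X : ℕ → Ω → ℕ) (U V : ℕ → Ω → ℝ) (r : ℕ)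
    (ω : Ω) : ℝ :=
  hitDeviation p (ssRun m (X · ω) (U · ω) (V · ω) r) (X r ω)

lemma measurable_hitNoise {mΩ : MeasurableSpace Ω} {X : ℕ → Ω → ℕ} {U V : ℕ → Ω → ℝ} {r : ℕ}
    (h : ∀ i ≤ r, Measurable fun ω => (X i ω, U i ω, V i ω)) :
    Measurable (hitNoise p m X U V r) := by
  have hX : Measurable (X r) := measurable_fst.comp (h r le_rfl)
  have hstate : Measurable fun ω => (ssRun m (X · ω) (U · ω) (V · ω) r, X r ω) :=
    (measurable_ssRun fun i hi => h i hi.le).prodMk hX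
  exact ((measurable_hitDeviation (p := p)).comp hstate :)

/-- The state before arrival `s` is a function of the earlier arrivals, which are independent
of arrival `s`, and the hit deviation of a fixed state has mean zero. -/
lemma integral_hitNoise_mul_hitNoise_eq_zero {mΩ : MeasurableSpace Ω} {P : Measure Ω}
    [IsProbabilityMeasure P] (hp0 : ∀ i, 0 ≤ p i) (hpmono : Antitone p) (hpsum : ∑' i, p i = 1)
    {X : ℕ → Ω → ℕ} {U V : ℕ → Ω → ℝ}
    (hmeas : ∀ t, Measurable fun ω => (X t ω, U t ω, V t ω))
    (hindep : iIndepFun (fun t ω => (X t ω, U t ω, V t ω)) P)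
    (hlaw : ∀ t, Measure.map (fun ω => (X t ω, U t ω, V t ω)) P
      = (itemLaw p).prod (unif01.prod unif01))
    {r s : ℕ} (hrs : r < s) :
    ∫ ω, hitNoise p m X U V r ω * hitNoise p m X U V s ω ∂P = 0 := by
  let A : Ω → ℝ × SSState m := fun ω =>
    (hitNoise p m X U V r ω, ssRun m (X · ω) (U · ω) (V · ω) s)
  have hA : ∀ {mΩ' : MeasurableSpace Ω},
      (∀ i < s, Measurable[mΩ'] fun ω => (X i ω, U i ω, V i ω)) → Measurable[mΩ'] A :=
    fun h => (measurable_hitNoise fun i hi => h i (hi.trans_lt hrs)).prodMk (measurable_ssRun h)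
  have hAX : A ⟂ᵢ[P] X s :=
    (hindep.indepFun_of_measurable_of_lt hmeas hA).comp measurable_id measurable_fst
  have hlawX : P.map (X s) = itemLaw p := by
    have := isProbabilityMeasure_unif01
    rw [show X s = Prod.fst ∘ fun ω => (X s ω, U s ω, V s ω) from rfl,
      ← Measure.map_map measurable_fst (hmeas s), hlaw s, Measure.map_fst_prod, measure_univ,
      one_smul]
  have hbd : ∀ t ω, |hitNoise p m X U V t ω| ≤ 1 := fun t ω =>
    abs_hitDeviation_le_one hp0 hpmono hpsum _ _
  have hint : Integrable (fun ω => hitNoise p m X U V r ω * hitNoise p m X U V s ω) P := by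
    refine .of_bound ((measurable_hitNoise fun i _ => hmeas i).mul
      (measurable_hitNoise fun i _ => hmeas i)).aestronglyMeasurable 1 (ae_of_all _ fun ω => ?_)
    rw [Real.norm_eq_abs, abs_mul]
    exact mul_le_one₀ (hbd r ω) (abs_nonneg _) (hbd s ω)
  have hφ : Measurable fun q : (ℝ × SSState m) × ℕ => q.1.1 * hitDeviation p q.1.2 q.2 :=
    measurable_fst.fst.mul
      ((measurable_hitDeviation (p := p)).comp (measurable_fst.snd.prodMk measurable_snd) :)
  refine hAX.integral_comp_eq_zero (hA fun i _ => hmeas i) (measurable_fst.comp (hmeas s)) hφ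
    hint fun a => ?_
  simp only [hlawX, integral_const_mul, integral_hitDeviation_itemLaw hp0 hpsum, mul_zero]

end HitNoise

/-- Items are indexed from `0`, so the paper's tail `∑_{j > m} p_j` is `∑_{j ≥ m} p j` here. -/
theorem min_bin_count_lower_bound
    {Ω : Type*} [MeasurableSpace Ω] (P : Measure Ω) [IsProbabilityMeasure P]
    (m : ℕ) (hm : 0 < m)
    (p : ℕ → ℝ) (hp0 : ∀ i, 0 ≤ p i) (hpmono : Antitone p) (hpsum : ∑' i, p i = 1)
    (X : ℕ → Ω → ℕ) (U V : ℕ → Ω → ℝ)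
    (hmeas : ∀ t, Measurable fun ω => (X t ω, U t ω, V t ω))
    (hindep : iIndepFun (fun t ω => (X t ω, U t ω, V t ω)) P)
    (hlaw : ∀ t, Measure.map (fun ω => (X t ω, U t ω, V t ω)) P
      = (itemLaw p).prod (unif01.prod unif01))
    (α' : ℝ) (hα' : α' < ∑' j, if m ≤ j then p j else 0) :
    ∀ᵐ ω ∂P, ∃ T : ℕ, ∀ t, T ≤ t →
      α' * t / m
        < (minCount (ssRun m (fun r => X r ω) (fun r => U r ω)
            (fun r => V r ω) t) : ℝ) := by
  set β := ∑' j, if m ≤ j then p j else 0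
  have hβ : ∀ s : SSState m, labelMass p s ≤ 1 - β := labelMass_le_one_sub_tail hp0 hpmono hpsum
  filter_upwards [ae_eventually_abs_sum_lt_mul_sq_of_orthogonal
    (fun r => measurable_hitNoise (m := m) fun i _ => hmeas i)
    (fun r ω => abs_hitDeviation_le_one hp0 hpmono hpsum _ _)
    (fun r s hrs => integral_hitNoise_mul_hitNoise_eq_zero hp0 hpmono hpsum hmeas hindep hlaw hrs)
    (half_pos (sub_pos.2 hα'))] with ω hω
  have hsq : ∀ᶠ k : ℕ in atTop,
      (α' + β) / 2 * k ^ 2 ≤ (missCount m (X · ω) (U · ω) (V · ω) (k ^ 2) : ℝ) :=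
    hω.mono fun k hk => by
      have hmiss := tail_mul_sub_le_missCount hβ (X · ω) (U · ω) (V · ω) (k ^ 2)
      have habs := (le_abs_self _).trans_lt hk
      unfold hitNoise at habs
      push_cast at hmiss
      linarith
  obtain ⟨T, hT⟩ := eventually_atTop.1 <| eventually_lt_of_eventually_mul_sq_le
    (fun _ _ h => Nat.cast_le.2 (missCount_mono _ _ _ h)) (by linarith : α' < (α' + β) / 2) m hsq
  refine ⟨T, fun t ht => ?_⟩
  have hmiss : (missCount m (X · ω) (U · ω) (V · ω) t : ℝ)
      ≤ m * (minCount (ssRun m (X · ω) (U · ω) (V · ω) t) + 1) := by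
    exact_mod_cast missCount_le hm (X · ω) (U · ω) (V · ω) t
  rw [div_lt_iff₀ (by exact_mod_cast hm)]
  linarith [hT t ht]
end
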